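/- arXiv:2204.13208 — 2 statements merged into one kernel-verified Lean document; each statement's English description precedes it below -/
import Mathlib

section
/- Define Ω_pull(x,y) = log[1 + ∑_{x⁺ ∈ S_y \ {x}} exp(‖Φ(x) − Φ(x⁺)‖² − α_y)] and its class average Ω̄_pull(y) = (1/|S_y|)∑_{x ∈ S_y} Ω_pull(x,y). Then Ω̄_pull(y) ≥ (2|S_y|/(|S_y|−1)) ∑_{j=1}^K V̂[Φ_j | y] − α_y + log(|S_y|−1), where V̂[Φ_j | y] is the empirical variance of the j-th coordinate of Φ over S_y. -/
/-!
By Jensen's inequality for `exp`, each pull term is at least `log (|S| - 1) - α` plus the mean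
squared distance from `Φ x` to the other points of the class. Averaging over `x` leaves the sum of
all pairwise squared distances, and `∑ₓ ∑ₓ' ‖Φ x - Φ x'‖² = 2 |S| ∑ₓ ‖Φ x - μ‖² = 2 |S|² ∑ⱼ V̂ⱼ`.
-/

open Finset

theorem Real.log_card_add_mean_le_log_sum_exp {ι : Type*} {s : Finset ι} (hs : s.Nonempty)
    (a : ι → ℝ) :
    Real.log #s + (#s : ℝ)⁻¹ * ∑ i ∈ s, a i ≤ Real.log (∑ i ∈ s, Real.exp (a i)) := by
  have hcard : (0 : ℝ) < #s := by exact_mod_cast hs.card_pos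
  have hjensen :
      Real.exp ((#s : ℝ)⁻¹ * ∑ i ∈ s, a i) ≤ (#s : ℝ)⁻¹ * ∑ i ∈ s, Real.exp (a i) := by
    have h := convexOn_exp.map_sum_le (t := s) (w := fun _ => (#s : ℝ)⁻¹) (p := a)
      (fun _ _ => by positivity) (by simp [hcard.ne']) (fun _ _ => Set.mem_univ _)
    simpa only [smul_eq_mul, ← mul_sum] using h
  rw [← Real.log_exp ((#s : ℝ)⁻¹ * _), ← Real.log_mul hcard.ne' (Real.exp_pos _).ne']
  gcongr
  rwa [← le_inv_mul_iff₀ hcard]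

theorem Real.log_card_add_mean_sub_le_log_one_add_sum_exp {ι : Type*} {s : Finset ι}
    (hs : s.Nonempty) (a : ι → ℝ) (c : ℝ) :
    Real.log #s + (#s : ℝ)⁻¹ * ∑ i ∈ s, a i - c ≤
      Real.log (1 + ∑ i ∈ s, Real.exp (a i - c)) := by
  have hcard : (0 : ℝ) < #s := by exact_mod_cast hs.card_pos
  calc _ = Real.log #s + (#s : ℝ)⁻¹ * ∑ i ∈ s, (a i - c) := by
        rw [sum_sub_distrib, sum_const, nsmul_eq_mul, mul_sub, inv_mul_cancel_left₀ hcard.ne',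
          add_sub_assoc]
    _ ≤ Real.log (∑ i ∈ s, Real.exp (a i - c)) := log_card_add_mean_le_log_sum_exp hs _
    _ ≤ Real.log (1 + ∑ i ∈ s, Real.exp (a i - c)) := by
        gcongr
        linarith

section Dispersion

variable {ι E : Type*} [NormedAddCommGroup E] [InnerProductSpace ℝ E]

theorem Finset.sum_sum_norm_sub_sq (s : Finset ι) (f : ι → E) :
    ∑ x ∈ s, ∑ y ∈ s, ‖f x - f y‖ ^ 2 =
      2 * #s * ∑ x ∈ s, ‖f x‖ ^ 2 - 2 * ‖∑ x ∈ s, f x‖ ^ 2 := by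
  have hcross : ∑ x ∈ s, ∑ y ∈ s, inner ℝ (f x) (f y) = ‖∑ x ∈ s, f x‖ ^ 2 := by
    rw [← real_inner_self_eq_norm_sq, sum_inner]
    simp_rw [inner_sum]
  simp only [norm_sub_sq_real, sum_add_distrib, sum_sub_distrib, sum_const, nsmul_eq_mul,
    ← mul_sum, hcross]
  ring

theorem Finset.sum_sub_mean_eq_zero (s : Finset ι) (f : ι → E) :
    ∑ x ∈ s, (f x - (#s : ℝ)⁻¹ • ∑ y ∈ s, f y) = 0 := by
  rcases s.eq_empty_or_nonempty with rfl | hs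
  · simp
  rw [sum_sub_distrib, sum_const, ← Nat.cast_smul_eq_nsmul ℝ,
    smul_inv_smul₀ (by exact_mod_cast hs.card_pos.ne'), sub_self]

theorem Finset.sum_sum_norm_sub_sq_eq_sum_norm_sub_mean (s : Finset ι) (f : ι → E) :
    ∑ x ∈ s, ∑ y ∈ s, ‖f x - f y‖ ^ 2 =
      2 * #s * ∑ x ∈ s, ‖f x - (#s : ℝ)⁻¹ • ∑ y ∈ s, f y‖ ^ 2 := by
  simpa only [sub_sub_sub_cancel_right, sum_sub_mean_eq_zero, norm_zero, sub_zero,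
    zero_pow two_ne_zero, mul_zero] using
    sum_sum_norm_sub_sq s (fun x => f x - (#s : ℝ)⁻¹ • ∑ y ∈ s, f y)

end Dispersion

/-- The average pull regulariser over class `y` is lower bounded by
`(2|S_y|/(|S_y|−1)) ∑ⱼ V̂[Φⱼ|y] − α_y + log(|S_y|−1)`. -/
theorem avg_pull_ge_variance {ι : Type*} [DecidableEq ι] (K : ℕ)
    (S : Finset ι) (hS : 2 ≤ S.card)
    (Φ : ι → EuclideanSpace ℝ (Fin K)) (α : ℝ)
    (μ : EuclideanSpace ℝ (Fin K)) (hμ : μ = (S.card : ℝ)⁻¹ • ∑ x ∈ S, Φ x)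
    (V : Fin K → ℝ)
    (hV : ∀ j, V j = (S.card : ℝ)⁻¹ * ∑ x ∈ S, (Φ x j - μ j) ^ 2)
    (Ωpull : ι → ℝ)
    (hΩ : ∀ x, Ωpull x =
      Real.log (1 + ∑ xp ∈ S.erase x, Real.exp (‖Φ x - Φ xp‖ ^ 2 - α))) :
    (S.card : ℝ)⁻¹ * ∑ x ∈ S, Ωpull x ≥
      (2 * (S.card : ℝ) / ((S.card : ℝ) - 1)) * (∑ j, V j)
        - α + Real.log ((S.card : ℝ) - 1) := by
  set n : ℝ := (#S : ℝ)
  have hn : 1 < n := by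
    simp only [n]
    exact_mod_cast hS
  have hn0 : 0 < n := by linarith
  have hpoint : ∀ x ∈ S,
      Real.log (n - 1) + (n - 1)⁻¹ * ∑ y ∈ S, ‖Φ x - Φ y‖ ^ 2 - α ≤ Ωpull x := by
    intro x hx
    have hcard : (#(S.erase x) : ℝ) = n - 1 := by
      rw [card_erase_of_mem hx, Nat.cast_pred (by omega)]
    have hne : (S.erase x).Nonempty := by
      rw [← card_pos, card_erase_of_mem hx]
      omega
    have h := Real.log_card_add_mean_sub_le_log_one_add_sum_exp hne (fun y => ‖Φ x - Φ y‖ ^ 2) α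
    rwa [hcard, sum_erase _ (by simp), ← hΩ] at h
  have hpairs : ∑ x ∈ S, ∑ y ∈ S, ‖Φ x - Φ y‖ ^ 2 = 2 * n * ∑ j, n * V j := by
    rw [sum_sum_norm_sub_sq_eq_sum_norm_sub_mean, ← hμ]
    simp only [EuclideanSpace.real_norm_sq_eq, PiLp.sub_apply, hV, mul_inv_cancel_left₀ hn0.ne']
    rw [sum_comm]
  calc _ = n⁻¹ * ∑ x ∈ S, (Real.log (n - 1) + (n - 1)⁻¹ * ∑ y ∈ S, ‖Φ x - Φ y‖ ^ 2 - α) := by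
        rw [sum_sub_distrib, sum_add_distrib, ← mul_sum, hpairs, ← mul_sum]
        simp only [sum_const, nsmul_eq_mul]
        field_simp [show n - 1 ≠ 0 by linarith]
        ring
    _ ≤ n⁻¹ * ∑ x ∈ S, Ωpull x := by
        gcongr with x hx
        exact hpoint x hx
end

section
/- Under the Gaussian embedding model of the previous statement with threshold t ∈ R, the thresholded AUC A_t = (1/L)∑_y E_{x|y} E_{x⁻|¬y} 1[f_y(x) − f_y(x⁻) > t] equals (1/(L(L−1))) ∑_y ∑_{y'≠y} Ψ((w_y^⊤(μ_y − μ_{y'}) − t) / (‖w_y‖ √(σ_y² + σ_{y'}²))), and A_t is nonincreasing in t. -/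
open MeasureTheory ProbabilityTheory Finset
open scoped NNReal ENNReal

/-- The standard normal cumulative distribution function. -/
noncomputable def stdNormalCDF (s : ℝ) : ℝ :=
  ∫ u in Set.Iic s, (Real.sqrt (2 * Real.pi))⁻¹ * Real.exp (-u ^ 2 / 2)

/-!
For classes `y ≠ y'`, the score gap `f_y(x) - f_y(x⁻)` with `x ~ N(μ_y, σ_y² I)` and
`x⁻ ~ N(μ_{y'}, σ_{y'}² I)` independent is a linear functional of a Gaussian vector, hence
`N(w_y ⬝ (μ_y - μ_{y'}), ‖w_y‖² (σ_y² + σ_{y'}²))`, so `P(gap > t)` is the `Ψ`-value in the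
formula and decreases in `t`. The product measure is linear in its second factor, so against the
uniform mixture of negatives the AUC is the average of these pairwise probabilities.
-/

section Gaussian

variable {ι : Type*} [Fintype ι]

lemma gaussianReal_pi_map_sum (m : ι → ℝ) (v : ι → ℝ≥0) :
    (Measure.pi fun i => gaussianReal (m i) (v i)).map (fun x => ∑ i, x i)
      = gaussianReal (∑ i, m i) (∑ i, v i) := by
  refine Measure.ext_of_charFun ?_
  ext t
  simp [charFun_map_sum_pi_eq_prod, charFun_gaussianReal, ← Complex.exp_sum, Finset.mul_sum,
    Finset.sum_mul, Finset.sum_div, Finset.sum_sub_distrib]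

lemma gaussianReal_pi_map_sum_mul (m : ι → ℝ) (v : ι → ℝ≥0) (w : ι → ℝ) :
    (Measure.pi fun i => gaussianReal (m i) (v i)).map (fun x => ∑ i, w i * x i)
      = gaussianReal (∑ i, w i * m i) (∑ i, ⟨w i ^ 2, sq_nonneg _⟩ * v i) := by
  have hcomp : (fun x : ι → ℝ => ∑ i, w i * x i)
      = (fun x => ∑ i, x i) ∘ (fun x i => w i * x i) := rfl
  rw [hcomp, ← Measure.map_map (by fun_prop) (by fun_prop),
    Measure.pi_map_pi fun i => by fun_prop]
  simp_rw [gaussianReal_map_const_mul]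
  exact gaussianReal_pi_map_sum _ _

lemma gaussianReal_prod_map_sub (m₁ m₂ : ℝ) (v₁ v₂ : ℝ≥0) :
    ((gaussianReal m₁ v₁).prod (gaussianReal m₂ v₂)).map (fun p => p.1 - p.2)
      = gaussianReal (m₁ - m₂) (v₁ + v₂) := by
  have hcomp : (fun p : ℝ × ℝ => p.1 - p.2) = (fun p => p.1 + p.2) ∘ Prod.map id (fun x => -x) := by
    ext p
    simp [sub_eq_add_neg]
  rw [hcomp, ← Measure.map_map (by fun_prop) (by fun_prop),
    ← Measure.map_prod_map _ _ (by fun_prop) (by fun_prop), Measure.map_id, gaussianReal_map_neg,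
    sub_eq_add_neg]
  exact gaussianReal_conv_gaussianReal

lemma gaussianReal_eq_map_gaussianReal_zero_one (m : ℝ) (v : ℝ≥0) :
    gaussianReal m v = (gaussianReal 0 1).map (fun x => m - Real.sqrt v * x) := by
  have hcomp : (fun x => m - Real.sqrt v * x) = (m - ·) ∘ (Real.sqrt v * ·) := rfl
  rw [hcomp, ← Measure.map_map (by fun_prop) (by fun_prop), gaussianReal_map_const_mul,
    gaussianReal_map_const_sub]
  congr <;> simp

lemma stdNormalCDF_eq_gaussianReal_Iic (s : ℝ) :
    stdNormalCDF s = (gaussianReal 0 1 (Set.Iic s)).toReal := by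
  rw [gaussianReal_apply_eq_integral _ one_ne_zero, ENNReal.toReal_ofReal
    (setIntegral_nonneg measurableSet_Iic fun x _ => gaussianPDFReal_nonneg 0 1 x)]
  simp [stdNormalCDF, gaussianPDFReal, neg_div]

lemma stdNormalCDF_mono : Monotone stdNormalCDF := fun s₁ s₂ h => by
  simp only [stdNormalCDF_eq_gaussianReal_Iic]
  exact ENNReal.toReal_mono (measure_ne_top _ _) (measure_mono (Set.Iic_subset_Iic.2 h))

lemma toReal_gaussianReal_Ioi (m t : ℝ) {v : ℝ≥0} (hv : v ≠ 0) :
    (gaussianReal m v (Set.Ioi t)).toReal = stdNormalCDF ((m - t) / Real.sqrt v) := by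
  have hsqrt : 0 < Real.sqrt v := Real.sqrt_pos.2 (NNReal.coe_pos.2 (pos_iff_ne_zero.2 hv))
  have hpre : (fun x => m - Real.sqrt v * x) ⁻¹' Set.Ioi t = Set.Iio ((m - t) / Real.sqrt v) := by
    ext x
    simp only [Set.mem_preimage, Set.mem_Ioi, Set.mem_Iio, lt_div_iff₀ hsqrt]
    constructor <;> intro h <;> linarith
  have := nullSingletonClass_gaussianReal (μ := 0) one_ne_zero
  rw [gaussianReal_eq_map_gaussianReal_zero_one,
    Measure.map_apply (by fun_prop) measurableSet_Ioi, hpre, measure_congr Iio_ae_eq_Iic,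
    stdNormalCDF_eq_gaussianReal_Iic]

/-- `P(w ⬝ x₁ - w ⬝ x₂ > t)` for independent `x₁ ~ N(μ₁, σ₁² I)` and `x₂ ~ N(μ₂, σ₂² I)`. -/
noncomputable def gaussianPairAUC (w μ₁ μ₂ : ι → ℝ) (σ₁ σ₂ : ℝ≥0) (t : ℝ) : ℝ :=
  stdNormalCDF (((∑ i, w i * (μ₁ i - μ₂ i)) - t) /
    (Real.sqrt (∑ i, w i ^ 2) * Real.sqrt ((σ₁ : ℝ) ^ 2 + (σ₂ : ℝ) ^ 2)))

lemma gaussianPairAUC_antitone (w μ₁ μ₂ : ι → ℝ) (σ₁ σ₂ : ℝ≥0) :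
    Antitone (gaussianPairAUC w μ₁ μ₂ σ₁ σ₂) := fun t₁ t₂ h =>
  stdNormalCDF_mono (div_le_div_of_nonneg_right (by linarith) (by positivity))

lemma toReal_pi_gaussianReal_prod_sub_gt {w : ι → ℝ} (hw : w ≠ 0) {σ₁ : ℝ≥0} (hσ₁ : 0 < σ₁)
    (σ₂ : ℝ≥0) (μ₁ μ₂ : ι → ℝ) (t : ℝ) :
    (((Measure.pi fun i => gaussianReal (μ₁ i) (σ₁ ^ 2)).prod
        (Measure.pi fun i => gaussianReal (μ₂ i) (σ₂ ^ 2)))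
      {p | (∑ i, w i * p.1 i) - (∑ i, w i * p.2 i) > t}).toReal
    = gaussianPairAUC w μ₁ μ₂ σ₁ σ₂ t := by
  set g : (ι → ℝ) → ℝ := fun x => ∑ i, w i * x i
  have hset : {p : (ι → ℝ) × (ι → ℝ) | g p.1 - g p.2 > t}
      = Prod.map g g ⁻¹' ((fun p : ℝ × ℝ => p.1 - p.2) ⁻¹' Set.Ioi t) := rfl
  have hw2 : 0 < ∑ i, w i ^ 2 := by
    obtain ⟨i, hi⟩ := Function.ne_iff.1 hw
    have hi : w i ≠ 0 := hi
    exact Finset.sum_pos' (fun j _ => sq_nonneg _) ⟨i, mem_univ i, by positivity⟩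
  set V : ℝ≥0 := (∑ i, ⟨w i ^ 2, sq_nonneg _⟩ * σ₁ ^ 2) + ∑ i, ⟨w i ^ 2, sq_nonneg _⟩ * σ₂ ^ 2
  have hV : (V : ℝ) = (∑ i, w i ^ 2) * ((σ₁ : ℝ) ^ 2 + (σ₂ : ℝ) ^ 2) := by
    simp only [V, mul_add, Finset.sum_mul]
    push_cast
    rfl
  have hV0 : V ≠ 0 := by
    rw [← NNReal.coe_ne_zero, hV]
    positivity
  rw [hset, ← Measure.map_apply (by fun_prop) (measurableSet_Ioi.preimage (by fun_prop)),
    ← Measure.map_prod_map _ _ (by fun_prop) (by fun_prop), gaussianReal_pi_map_sum_mul,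
    gaussianReal_pi_map_sum_mul, ← Measure.map_apply (by fun_prop) measurableSet_Ioi,
    gaussianReal_prod_map_sub, toReal_gaussianReal_Ioi _ _ hV0, hV, Real.sqrt_mul hw2.le,
    ← Finset.sum_sub_distrib]
  simp_rw [gaussianPairAUC, mul_sub]

end Gaussian

lemma MeasureTheory.Measure.prod_finsetSum_right {α β ι : Type*} [MeasurableSpace α]
    [MeasurableSpace β] (μ : Measure α) (ν : ι → Measure β) [∀ i, SFinite (ν i)] (s : Finset ι) :
    μ.prod (∑ i ∈ s, ν i) = ∑ i ∈ s, μ.prod (ν i) := by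
  simp_rw [← Finset.sum_coe_sort s, ← Measure.sum_fintype, Measure.prod_sum_right]

lemma toReal_prod_smul_finsetSum_apply {α β ι : Type*} [MeasurableSpace α] [MeasurableSpace β]
    (μ : Measure α) [IsFiniteMeasure μ] (ν : ι → Measure β) [∀ i, IsFiniteMeasure (ν i)]
    (c : ℝ≥0∞) (s : Finset ι) (S : Set (α × β)) :
    ((μ.prod (c • ∑ i ∈ s, ν i)) S).toReal = c.toReal * ∑ i ∈ s, ((μ.prod (ν i)) S).toReal := by
  rw [Measure.prod_smul_right, Measure.prod_finsetSum_right, Measure.smul_apply,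
    Measure.finsetSum_apply, smul_eq_mul, ENNReal.toReal_mul,
    ENNReal.toReal_sum fun i _ => measure_ne_top _ _]

-- At `n = 1` both sides are junk zeros: `⊤.toReal = 0` and `(0 : ℝ)⁻¹ = 0`.
lemma ENNReal.toReal_inv_natCast_sub_one {n : ℕ} (hn : 1 ≤ n) :
    (((n : ℝ≥0∞) - 1)⁻¹).toReal = ((n : ℝ) - 1)⁻¹ := by
  rw [ENNReal.toReal_inv, ENNReal.toReal_sub_of_le (by exact_mod_cast hn) (by simp)]
  simp

theorem auc_threshold_gaussian_general (K L : ℕ)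
    (μ : Fin L → Fin K → ℝ) (σ : Fin L → ℝ≥0) (hσ : ∀ y, 0 < σ y)
    (w : Fin L → Fin K → ℝ) (hw : ∀ y, w y ≠ 0) (b : Fin L → ℝ)
    (f : Fin L → (Fin K → ℝ) → ℝ)
    (hf : ∀ y z, f y z = (∑ i, w y i * z i) + b y)
    (P : Fin L → Measure (Fin K → ℝ))
    (hP : ∀ y, P y = Measure.pi fun i => gaussianReal (μ y i) (σ y ^ 2))
    (Pneg : Fin L → Measure (Fin K → ℝ))
    (hPneg : ∀ y, Pneg y = ((L : ℝ≥0∞) - 1)⁻¹ • ∑ y' ∈ Finset.univ.erase y, P y')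
    (A : ℝ → ℝ)
    (hA : ∀ t, A t = (1 / (L : ℝ)) *
        ∑ y, (((P y).prod (Pneg y)) {p | f y p.1 - f y p.2 > t}).toReal) :
    (∀ t, A t = (1 / ((L : ℝ) * ((L : ℝ) - 1))) *
          ∑ y, ∑ y' ∈ Finset.univ.erase y,
            stdNormalCDF (((∑ i, w y i * (μ y i - μ y' i)) - t) /
              (Real.sqrt (∑ i, w y i ^ 2) *
                Real.sqrt ((σ y : ℝ) ^ 2 + (σ y' : ℝ) ^ 2))))
      ∧ ∀ t₁ t₂ : ℝ, t₁ ≤ t₂ → A t₂ ≤ A t₁ := by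
  have hPprob : ∀ y, IsProbabilityMeasure (P y) := fun y => by rw [hP]; infer_instance
  have hpair : ∀ t y y', (((P y).prod (P y')) {p | f y p.1 - f y p.2 > t}).toReal
      = gaussianPairAUC (w y) (μ y) (μ y') (σ y) (σ y') t := by
    intro t y y'
    simp only [hf, add_sub_add_right_eq_sub, hP]
    exact toReal_pi_gaussianReal_prod_sub_gt (hw y) (hσ y) _ _ _ t
  have hmix : ∀ t y, (((P y).prod (Pneg y)) {p | f y p.1 - f y p.2 > t}).toReal
      = ((L : ℝ) - 1)⁻¹ *
        ∑ y' ∈ Finset.univ.erase y, gaussianPairAUC (w y) (μ y) (μ y') (σ y) (σ y') t := by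
    intro t y
    rw [hPneg, toReal_prod_smul_finsetSum_apply, ENNReal.toReal_inv_natCast_sub_one y.pos]
    simp_rw [hpair]
  have hformula : ∀ t, A t = (1 / ((L : ℝ) * ((L : ℝ) - 1))) *
      ∑ y, ∑ y' ∈ Finset.univ.erase y, gaussianPairAUC (w y) (μ y) (μ y') (σ y) (σ y') t := by
    intro t
    simp_rw [hA, hmix]
    rw [← Finset.mul_sum, ← mul_assoc, one_div, one_div, mul_inv]
  refine ⟨hformula, fun t₁ t₂ ht => ?_⟩
  have hcoef : 0 ≤ 1 / ((L : ℝ) * ((L : ℝ) - 1)) := by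
    rcases L.eq_zero_or_pos with rfl | hpos
    · simp
    · exact one_div_nonneg.2 (mul_nonneg L.cast_nonneg (sub_nonneg.2 (Nat.one_le_cast.2 hpos)))
  rw [hformula, hformula]
  gcongr with y _ y' _
  exact gaussianPairAUC_antitone _ _ _ _ _ ht

/-- Thresholded one-vs-rest AUC under the Gaussian embedding model:
`A_t = (1/(L(L−1))) ∑_y ∑_{y'≠y} Ψ((w_y^⊤(μ_y − μ_{y'}) − t)/(‖w_y‖√(σ_y² + σ_{y'}²)))`,
and `A_t` is nonincreasing in `t`. -/
theorem auc_threshold_gaussian (K L : ℕ) (hL : 2 ≤ L)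
    (μ : Fin L → Fin K → ℝ) (σ : Fin L → ℝ≥0) (hσ : ∀ y, 0 < σ y)
    (w : Fin L → Fin K → ℝ) (hw : ∀ y, w y ≠ 0) (b : Fin L → ℝ)
    (f : Fin L → (Fin K → ℝ) → ℝ)
    (hf : ∀ y z, f y z = (∑ i, w y i * z i) + b y)
    (P : Fin L → Measure (Fin K → ℝ))
    (hP : ∀ y, P y = Measure.pi fun i => gaussianReal (μ y i) (σ y ^ 2))
    (Pneg : Fin L → Measure (Fin K → ℝ))
    (hPneg : ∀ y, Pneg y = ((L : ℝ≥0∞) - 1)⁻¹ • ∑ y' ∈ Finset.univ.erase y, P y')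
    (A : ℝ → ℝ)
    (hA : ∀ t, A t = (1 / (L : ℝ)) *
        ∑ y, (((P y).prod (Pneg y)) {p | f y p.1 - f y p.2 > t}).toReal) :
    (∀ t, A t = (1 / ((L : ℝ) * ((L : ℝ) - 1))) *
          ∑ y, ∑ y' ∈ Finset.univ.erase y,
            stdNormalCDF (((∑ i, w y i * (μ y i - μ y' i)) - t) /
              (Real.sqrt (∑ i, w y i ^ 2) *
                Real.sqrt ((σ y : ℝ) ^ 2 + (σ y' : ℝ) ^ 2))))
      ∧ ∀ t₁ t₂ : ℝ, t₁ ≤ t₂ → A t₂ ≤ A t₁ :=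
  auc_threshold_gaussian_general K L μ σ hσ w hw b f hf P hP Pneg hPneg A hA
end
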